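/- Let 0 < q < 1 be real, f an odd positive integer, χ : ℤ → ℂ a function periodic with period f, n ∈ ℕ, r ≥ 1 an integer, x ∈ ℝ. Define E^{(r)}_{n,χ,q}(x) = (1+q)^r (1-q)^{-n} ∑_{l=0}^n C(n,l) (-q^x)^l ∑_{a_1,...,a_r=0}^{f-1} (∏_{j=1}^r χ(a_j)) (-q^l)^{a_1+⋯+a_r} (1+q^{lf})^{-r}, and E^{(r)}_{n,q}(y) = (1+q)^r (1-q)^{-n} ∑_{l=0}^n C(n,l)(-1)^l q^{ly}(1+q^l)^{-r}. Then E^{(r)}_{n,χ,q}(x) = [f]_q^n ((1+q)/(1+q^f))^r ∑_{a_1,...,a_r=0}^{f-1} (∏_{j=1}^r χ(a_j)) (-1)^{a_1+⋯+a_r} E^{(r)}_{n,q^f}((x + a_1 + ⋯ + a_r)/f). -/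

import Mathlib

/-- The `q`-Euler polynomial of order `r`, `E^{(r)}_{n,q}(y)`, viewed in `ℂ` (real `q`). -/
noncomputable def qEulerHigherC (r n : ℕ) (q y : ℝ) : ℂ :=
  (1 + (q : ℂ)) ^ r * ((1 - (q : ℂ)) ^ n)⁻¹ *
    ∑ l ∈ Finset.range (n + 1),
      (n.choose l : ℂ) * (-1) ^ l * (Real.rpow q ((l : ℝ) * y) : ℂ) *
        ((1 + (q : ℂ) ^ l) ^ r)⁻¹

/-- The generalized `q`-Euler polynomial of order `r` attached to `χ`. -/
noncomputable def qEulerHigherChi (r n : ℕ) (q : ℝ) (f : ℕ) (χ : ℤ → ℂ) (x : ℝ) : ℂ :=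
  (1 + (q : ℂ)) ^ r * ((1 - (q : ℂ)) ^ n)⁻¹ *
    ∑ l ∈ Finset.range (n + 1),
      (n.choose l : ℂ) * (-(Real.rpow q x : ℂ)) ^ l *
        ∑ a : Fin r → Fin f,
          (∏ j, χ (a j)) * (-(q : ℂ) ^ l) ^ (∑ i, (a i : ℕ)) *
            ((1 + (q : ℂ) ^ (l * f)) ^ r)⁻¹

/-!
Both sides are finite double sums over `l ≤ n` and `a : Fin r → Fin f`. After exchanging the
two sums on the left, the identity holds term by term: with `S = a₁ + ⋯ + aᵣ`,
`(-q^x)^l (-q^l)^S = (-1)^S (-1)^l q^{l(x+S)}` and `(q^f)^{l (x+S)/f} = q^{l(x+S)}`, so both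
sides share the inner sum `∑_{l ≤ n} C(n,l) (-1)^l q^{l(x+S)} (1 + q^{lf})^{-r}`, and the
prefactors agree since `[f]_q^n (1-q^f)^{-n} = (1-q)^{-n}`.
-/

open Finset

noncomputable def qEulerInnerSum (r n f S : ℕ) (q x : ℝ) : ℂ :=
  ∑ l ∈ range (n + 1),
    (n.choose l : ℂ) * (-1) ^ l * (Real.rpow q x : ℂ) ^ l * (q : ℂ) ^ (l * S) *
      ((1 + (q : ℂ) ^ (l * f)) ^ r)⁻¹

lemma rpow_pow_mul_add_div {q : ℝ} (hq : 0 < q) {f : ℕ} (hf : f ≠ 0) (l S : ℕ) (x : ℝ) :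
    Real.rpow (q ^ f) ((l : ℝ) * ((x + S) / f)) = Real.rpow q x ^ l * q ^ (l * S) := by
  show (q ^ f) ^ ((l : ℝ) * ((x + S) / f)) = (q ^ x) ^ l * q ^ (l * S)
  rw [← Real.rpow_natCast q (l * S), ← Real.rpow_natCast q f,
    ← Real.rpow_natCast (q ^ x) l, ← Real.rpow_mul hq.le, ← Real.rpow_mul hq.le,
    ← Real.rpow_add hq]
  congr 1
  field_simp
  push_cast
  ring

lemma qEulerHigherChi_eq_sum_qEulerInnerSum (r n : ℕ) (q : ℝ) (f : ℕ) (χ : ℤ → ℂ) (x : ℝ) :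
    qEulerHigherChi r n q f χ x
      = (1 + (q : ℂ)) ^ r * ((1 - (q : ℂ)) ^ n)⁻¹ *
        ∑ a : Fin r → Fin f,
          (∏ j, χ (a j)) * (-1) ^ (∑ i, (a i : ℕ)) *
            qEulerInnerSum r n f (∑ i, (a i : ℕ)) q x := by
  simp only [qEulerHigherChi, qEulerInnerSum, mul_sum (R := ℂ)]
  rw [sum_comm]
  refine sum_congr rfl fun a _ => sum_congr rfl fun l _ => ?_
  rw [neg_pow, neg_pow (_ ^ l), pow_mul]
  ring

lemma qEulerHigherC_pow_eq_qEulerInnerSum {q : ℝ} (hq : 0 < q) {f : ℕ} (hf : f ≠ 0)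
    (r n S : ℕ) (x : ℝ) :
    qEulerHigherC r n (q ^ f) ((x + S) / f)
      = (1 + (q : ℂ) ^ f) ^ r * ((1 - (q : ℂ) ^ f) ^ n)⁻¹ * qEulerInnerSum r n f S q x := by
  simp only [qEulerHigherC, qEulerInnerSum, rpow_pow_mul_add_div hq hf]
  push_cast
  congr 1
  refine sum_congr rfl fun l _ => ?_
  rw [← pow_mul, mul_comm f l]
  ring

theorem qEuler_chi_distribution_general (q : ℝ) (hq0 : 0 < q) (hq1 : q < 1)
    (f : ℕ) (hf1 : 1 ≤ f) (χ : ℤ → ℂ)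
    (n : ℕ) (r : ℕ) (x : ℝ) :
    qEulerHigherChi r n q f χ x
      = (((1 - q ^ f) / (1 - q) : ℝ) : ℂ) ^ n * ((1 + (q : ℂ)) / (1 + (q : ℂ) ^ f)) ^ r *
        ∑ a : Fin r → Fin f,
          (∏ j, χ (a j)) * (-1) ^ (∑ i, (a i : ℕ)) *
            qEulerHigherC r n (q ^ f) ((x + ∑ i, (a i : ℕ)) / f) := by
  have hf : f ≠ 0 := by omega
  have hqf : q ^ f < 1 := pow_lt_one₀ hq0.le hq1 hf
  have hsub : (1 : ℂ) - q ≠ 0 := by exact_mod_cast (sub_pos.mpr hq1).ne'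
  have hsub_pow : (1 : ℂ) - (q : ℂ) ^ f ≠ 0 := by exact_mod_cast (sub_pos.mpr hqf).ne'
  have hadd_pow : (1 : ℂ) + (q : ℂ) ^ f ≠ 0 := by
    exact_mod_cast (by positivity : (0 : ℝ) < 1 + q ^ f).ne'
  simp only [qEulerHigherChi_eq_sum_qEulerInnerSum, qEulerHigherC_pow_eq_qEulerInnerSum hq0 hf,
    mul_sum]
  refine sum_congr rfl fun a _ => ?_
  push_cast
  rw [div_pow, div_pow]
  field_simp

theorem qEuler_chi_distribution (q : ℝ) (hq0 : 0 < q) (hq1 : q < 1)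
    (f : ℕ) (hf : Odd f) (hf1 : 1 ≤ f) (χ : ℤ → ℂ)
    (hχ : ∀ m : ℤ, χ (m + f) = χ m) (n : ℕ) (r : ℕ) (hr : 1 ≤ r) (x : ℝ) :
    qEulerHigherChi r n q f χ x
      = (((1 - q ^ f) / (1 - q) : ℝ) : ℂ) ^ n * ((1 + (q : ℂ)) / (1 + (q : ℂ) ^ f)) ^ r *
        ∑ a : Fin r → Fin f,
          (∏ j, χ (a j)) * (-1) ^ (∑ i, (a i : ℕ)) *
            qEulerHigherC r n (q ^ f) ((x + ∑ i, (a i : ℕ)) / f) :=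
  qEuler_chi_distribution_general q hq0 hq1 f hf1 χ n r x
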